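/- Define, for a positive integer n: k = ⌊(50·⌊(49n + 1)/48⌋ + 13)/49⌋, b = ⌊(54·⌊(53·⌊(52·⌊(51k + 20)/50⌋ + 24)/51⌋ + 31)/52⌋ + 35)/53⌋, and p(n) = 2·⌊(3·⌊(10·⌊(9·⌊(56·⌊(55b + 42)/54⌋ + 54)/55⌋ + 1)/8⌋ + 8)/9⌋ + 1)/2⌋ + 1. Then this formula generates all primes in the open interval (7, 121): every prime q with 7 < q < 121 equals p(n) for some positive integer n, and conversely every value p(n) lying strictly between 7 and 121 is prime. -/
import Mathlib


/-- `k` from the paper's prime-7 formula. -/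
def sefK (n : ℤ) : ℤ :=
  ⌊(50 * (⌊(49 * (n : ℚ) + 1) / 48⌋ : ℚ) + 13) / 49⌋

/-- `b` from the paper's prime-7 formula. -/
def sefB (n : ℤ) : ℤ :=
  ⌊(54 * (⌊(53 * (⌊(52 * (⌊(51 * (sefK n : ℚ) + 20) / 50⌋ : ℚ) + 24) / 51⌋ : ℚ) + 31) / 52⌋ : ℚ)
      + 35) / 53⌋

/-- `p` from the paper's prime-7 formula. -/
def sefP (n : ℤ) : ℤ :=
  2 * ⌊(3 * (⌊(10 * (⌊(9 * (⌊(56 * (⌊(55 * (sefB n : ℚ) + 42) / 54⌋ : ℚ) + 54) / 55⌋ : ℚ)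
      + 1) / 8⌋ : ℚ) + 8) / 9⌋ : ℚ) + 1) / 2⌋ + 1

private lemma stepm {x y : ℤ} (c d e : ℚ) (hc : 0 ≤ c) (he : 0 < e) (h : x ≤ y) :
    ⌊(c * (x : ℚ) + d) / e⌋ ≤ ⌊(c * (y : ℚ) + d) / e⌋ := by
  have h' : (x : ℚ) ≤ y := by exact_mod_cast h
  apply Int.floor_mono
  gcongr

private lemma sefK_mono {x y : ℤ} (h : x ≤ y) : sefK x ≤ sefK y := by
  unfold sefK
  exact stepm 50 13 49 (by norm_num) (by norm_num)
    (stepm 49 1 48 (by norm_num) (by norm_num) h)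

private lemma sefB_mono {x y : ℤ} (h : x ≤ y) : sefB x ≤ sefB y := by
  unfold sefB
  exact stepm 54 35 53 (by norm_num) (by norm_num)
    (stepm 53 31 52 (by norm_num) (by norm_num)
      (stepm 52 24 51 (by norm_num) (by norm_num)
        (stepm 51 20 50 (by norm_num) (by norm_num) (sefK_mono h))))

private lemma sefP_mono {x y : ℤ} (h : x ≤ y) : sefP x ≤ sefP y := by
  unfold sefP
  have := stepm 3 1 2 (by norm_num) (by norm_num)
    (stepm 10 8 9 (by norm_num) (by norm_num)
      (stepm 9 1 8 (by norm_num) (by norm_num)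
        (stepm 56 54 55 (by norm_num) (by norm_num)
          (stepm 55 42 54 (by norm_num) (by norm_num) (sefB_mono h)))))
  omega

lemma v1 : sefP 1 = 11 := by norm_num [sefP, sefB, sefK]
lemma v2 : sefP 2 = 13 := by norm_num [sefP, sefB, sefK]
lemma v3 : sefP 3 = 17 := by norm_num [sefP, sefB, sefK]
lemma v4 : sefP 4 = 19 := by norm_num [sefP, sefB, sefK]
lemma v5 : sefP 5 = 23 := by norm_num [sefP, sefB, sefK]
lemma v6 : sefP 6 = 29 := by norm_num [sefP, sefB, sefK]
lemma v7 : sefP 7 = 31 := by norm_num [sefP, sefB, sefK]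
lemma v8 : sefP 8 = 37 := by norm_num [sefP, sefB, sefK]
lemma v9 : sefP 9 = 41 := by norm_num [sefP, sefB, sefK]
lemma v10 : sefP 10 = 43 := by norm_num [sefP, sefB, sefK]
lemma v11 : sefP 11 = 47 := by norm_num [sefP, sefB, sefK]
lemma v12 : sefP 12 = 53 := by norm_num [sefP, sefB, sefK]
lemma v13 : sefP 13 = 59 := by norm_num [sefP, sefB, sefK]
lemma v14 : sefP 14 = 61 := by norm_num [sefP, sefB, sefK]
lemma v15 : sefP 15 = 67 := by norm_num [sefP, sefB, sefK]
lemma v16 : sefP 16 = 71 := by norm_num [sefP, sefB, sefK]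
lemma v17 : sefP 17 = 73 := by norm_num [sefP, sefB, sefK]
lemma v18 : sefP 18 = 79 := by norm_num [sefP, sefB, sefK]
lemma v19 : sefP 19 = 83 := by norm_num [sefP, sefB, sefK]
lemma v20 : sefP 20 = 89 := by norm_num [sefP, sefB, sefK]
lemma v21 : sefP 21 = 97 := by norm_num [sefP, sefB, sefK]
lemma v22 : sefP 22 = 101 := by norm_num [sefP, sefB, sefK]
lemma v23 : sefP 23 = 103 := by norm_num [sefP, sefB, sefK]
lemma v24 : sefP 24 = 107 := by norm_num [sefP, sefB, sefK]
lemma v25 : sefP 25 = 109 := by norm_num [sefP, sefB, sefK]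
lemma v26 : sefP 26 = 113 := by norm_num [sefP, sefB, sefK]
lemma v27 : sefP 27 = 121 := by norm_num [sefP, sefB, sefK]

theorem primes_between_7_and_121 :
    (∀ q : ℤ, Prime q → 7 < q → q < 121 → ∃ n : ℤ, 0 < n ∧ q = sefP n) ∧
      (∀ n : ℤ, 0 < n → 7 < sefP n → sefP n < 121 → Prime (sefP n)) := by
  constructor
  · intro q hq h7 h121
    interval_cases q
    · exact absurd hq (by norm_num)
    · exact absurd hq (by norm_num)
    · exact absurd hq (by norm_num)
    · exact ⟨1, by norm_num, (v1).symm⟩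
    · exact absurd hq (by norm_num)
    · exact ⟨2, by norm_num, (v2).symm⟩
    · exact absurd hq (by norm_num)
    · exact absurd hq (by norm_num)
    · exact absurd hq (by norm_num)
    · exact ⟨3, by norm_num, (v3).symm⟩
    · exact absurd hq (by norm_num)
    · exact ⟨4, by norm_num, (v4).symm⟩
    · exact absurd hq (by norm_num)
    · exact absurd hq (by norm_num)
    · exact absurd hq (by norm_num)
    · exact ⟨5, by norm_num, (v5).symm⟩
    · exact absurd hq (by norm_num)
    · exact absurd hq (by norm_num)
    · exact absurd hq (by norm_num)
    · exact absurd hq (by norm_num)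
    · exact absurd hq (by norm_num)
    · exact ⟨6, by norm_num, (v6).symm⟩
    · exact absurd hq (by norm_num)
    · exact ⟨7, by norm_num, (v7).symm⟩
    · exact absurd hq (by norm_num)
    · exact absurd hq (by norm_num)
    · exact absurd hq (by norm_num)
    · exact absurd hq (by norm_num)
    · exact absurd hq (by norm_num)
    · exact ⟨8, by norm_num, (v8).symm⟩
    · exact absurd hq (by norm_num)
    · exact absurd hq (by norm_num)
    · exact absurd hq (by norm_num)
    · exact ⟨9, by norm_num, (v9).symm⟩
    · exact absurd hq (by norm_num)
    · exact ⟨10, by norm_num, (v10).symm⟩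
    · exact absurd hq (by norm_num)
    · exact absurd hq (by norm_num)
    · exact absurd hq (by norm_num)
    · exact ⟨11, by norm_num, (v11).symm⟩
    · exact absurd hq (by norm_num)
    · exact absurd hq (by norm_num)
    · exact absurd hq (by norm_num)
    · exact absurd hq (by norm_num)
    · exact absurd hq (by norm_num)
    · exact ⟨12, by norm_num, (v12).symm⟩
    · exact absurd hq (by norm_num)
    · exact absurd hq (by norm_num)
    · exact absurd hq (by norm_num)
    · exact absurd hq (by norm_num)
    · exact absurd hq (by norm_num)
    · exact ⟨13, by norm_num, (v13).symm⟩
    · exact absurd hq (by norm_num)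
    · exact ⟨14, by norm_num, (v14).symm⟩
    · exact absurd hq (by norm_num)
    · exact absurd hq (by norm_num)
    · exact absurd hq (by norm_num)
    · exact absurd hq (by norm_num)
    · exact absurd hq (by norm_num)
    · exact ⟨15, by norm_num, (v15).symm⟩
    · exact absurd hq (by norm_num)
    · exact absurd hq (by norm_num)
    · exact absurd hq (by norm_num)
    · exact ⟨16, by norm_num, (v16).symm⟩
    · exact absurd hq (by norm_num)
    · exact ⟨17, by norm_num, (v17).symm⟩
    · exact absurd hq (by norm_num)
    · exact absurd hq (by norm_num)
    · exact absurd hq (by norm_num)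
    · exact absurd hq (by norm_num)
    · exact absurd hq (by norm_num)
    · exact ⟨18, by norm_num, (v18).symm⟩
    · exact absurd hq (by norm_num)
    · exact absurd hq (by norm_num)
    · exact absurd hq (by norm_num)
    · exact ⟨19, by norm_num, (v19).symm⟩
    · exact absurd hq (by norm_num)
    · exact absurd hq (by norm_num)
    · exact absurd hq (by norm_num)
    · exact absurd hq (by norm_num)
    · exact absurd hq (by norm_num)
    · exact ⟨20, by norm_num, (v20).symm⟩
    · exact absurd hq (by norm_num)
    · exact absurd hq (by norm_num)
    · exact absurd hq (by norm_num)
    · exact absurd hq (by norm_num)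
    · exact absurd hq (by norm_num)
    · exact absurd hq (by norm_num)
    · exact absurd hq (by norm_num)
    · exact ⟨21, by norm_num, (v21).symm⟩
    · exact absurd hq (by norm_num)
    · exact absurd hq (by norm_num)
    · exact absurd hq (by norm_num)
    · exact ⟨22, by norm_num, (v22).symm⟩
    · exact absurd hq (by norm_num)
    · exact ⟨23, by norm_num, (v23).symm⟩
    · exact absurd hq (by norm_num)
    · exact absurd hq (by norm_num)
    · exact absurd hq (by norm_num)
    · exact ⟨24, by norm_num, (v24).symm⟩
    · exact absurd hq (by norm_num)
    · exact ⟨25, by norm_num, (v25).symm⟩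
    · exact absurd hq (by norm_num)
    · exact absurd hq (by norm_num)
    · exact absurd hq (by norm_num)
    · exact ⟨26, by norm_num, (v26).symm⟩
    · exact absurd hq (by norm_num)
    · exact absurd hq (by norm_num)
    · exact absurd hq (by norm_num)
    · exact absurd hq (by norm_num)
    · exact absurd hq (by norm_num)
    · exact absurd hq (by norm_num)
    · exact absurd hq (by norm_num)
  · intro n hn h7 h121
    have h26 : n ≤ 26 := by
      by_contra hc
      have : sefP 27 ≤ sefP n := sefP_mono (by omega)
      rw [v27] at this
      omega
    interval_cases n
    · rw [v1] at h121 ⊢; norm_num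
    · rw [v2] at h121 ⊢; norm_num
    · rw [v3] at h121 ⊢; norm_num
    · rw [v4] at h121 ⊢; norm_num
    · rw [v5] at h121 ⊢; norm_num
    · rw [v6] at h121 ⊢; norm_num
    · rw [v7] at h121 ⊢; norm_num
    · rw [v8] at h121 ⊢; norm_num
    · rw [v9] at h121 ⊢; norm_num
    · rw [v10] at h121 ⊢; norm_num
    · rw [v11] at h121 ⊢; norm_num
    · rw [v12] at h121 ⊢; norm_num
    · rw [v13] at h121 ⊢; norm_num
    · rw [v14] at h121 ⊢; norm_num
    · rw [v15] at h121 ⊢; norm_num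
    · rw [v16] at h121 ⊢; norm_num
    · rw [v17] at h121 ⊢; norm_num
    · rw [v18] at h121 ⊢; norm_num
    · rw [v19] at h121 ⊢; norm_num
    · rw [v20] at h121 ⊢; norm_num
    · rw [v21] at h121 ⊢; norm_num
    · rw [v22] at h121 ⊢; norm_num
    · rw [v23] at h121 ⊢; norm_num
    · rw [v24] at h121 ⊢; norm_num
    · rw [v25] at h121 ⊢; norm_num
    · rw [v26] at h121 ⊢; norm_num
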